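/- arXiv:2510.05591 — 6 statements merged into one kernel-verified Lean document; each statement's English description precedes it below -/
import Mathlib

section
/- Let B be a Boolean algebra with a contact relation δ satisfying x δ (y ∨ z) ⟺ (x δ y or x δ z). Suppose good tuples (b_j)_{j<m} and (b'_j)_{j<m} follow the same arrangement f : m → n in good tuples (a_i)_{i<n} and (a'_i)_{i<n} respectively. If the nerve graphs of (b_j) and (b'_j) coincide (i.e., b_i δ b_j ⟺ b'_i δ b'_j for all i, j), then the nerve graphs of (a_i) and (a'_i) coincide (a_i δ a_j ⟺ a'_i δ a'_j). -/
/-!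
Because the `a i` are pairwise disjoint and the `b k` cover `⊤`, the refinement `b k ≤ a (f k)`
forces each `a i` to be the join of the fibre `{b k | f k = i}`. Additivity of the contact
relation then makes `a i δ a j` equivalent to `b p δ b q` for some `p, q` with `f p = i` and
`f q = j`, a condition read off from `f` and the nerve of `b` alone.
-/

/-- A contact algebra structure on a Boolean algebra. -/
structure ContactStruct (B : Type*) [BooleanAlgebra B] where
  delta : B → B → Prop
  symm : ∀ a b, delta a b → delta b a
  bot_not : ∀ a, ¬ delta ⊥ a
  refl : ∀ a, a ≠ ⊥ → delta a a
  sup_iff : ∀ x y z, delta x (y ⊔ z) ↔ (delta x y ∨ delta x z)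

/-- A good tuple: a finite minimal cover whose distinct entries have meet `⊥`. -/
def IsGoodTuple {B : Type*} [BooleanAlgebra B] {n : ℕ} (a : Fin n → B) : Prop :=
  Finset.univ.sup a = ⊤ ∧ (∀ i j : Fin n, i ≠ j → a i ⊓ a j = ⊥) ∧
    (∀ i j : Fin n, i ≠ j → ¬ a i ≤ a j)

namespace ContactStruct

variable {B : Type*} [BooleanAlgebra B] (C : ContactStruct B) {ι : Type*}

lemma delta_comm {x y : B} : C.delta x y ↔ C.delta y x :=
  ⟨C.symm x y, C.symm y x⟩

lemma delta_finset_sup_right_iff (x : B) (s : Finset ι) (g : ι → B) :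
    C.delta x (s.sup g) ↔ ∃ i ∈ s, C.delta x (g i) := by
  classical
  induction s using Finset.induction_on with
  | empty => simpa using fun h => C.bot_not x (C.symm _ _ h)
  | insert j s _ ih => simp [C.sup_iff, ih]

lemma delta_finset_sup_left_iff (s : Finset ι) (g : ι → B) (y : B) :
    C.delta (s.sup g) y ↔ ∃ i ∈ s, C.delta (g i) y := by
  simp only [C.delta_comm (y := y), delta_finset_sup_right_iff]

lemma delta_finset_sup_sup_iff {κ : Type*} (s : Finset ι) (g : ι → B) (t : Finset κ)
    (h : κ → B) :
    C.delta (s.sup g) (t.sup h) ↔ ∃ i ∈ s, ∃ j ∈ t, C.delta (g i) (h j) := by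
  rw [delta_finset_sup_left_iff]
  simp only [delta_finset_sup_right_iff]

end ContactStruct

section Refinement

variable {B : Type*} [BooleanAlgebra B] {ι κ : Type*} [DecidableEq ι] [Fintype κ]
  {a : ι → B} {b : κ → B} {f : κ → ι}

lemma eq_finset_sup_fiber (ha : ∀ i j, i ≠ j → a i ⊓ a j = ⊥)
    (hb : Finset.univ.sup b = ⊤) (hba : ∀ k, b k ≤ a (f k)) (i : ι) :
    a i = (Finset.univ.filter (f · = i)).sup b := by
  refine le_antisymm ?_ (Finset.sup_le fun k hk => (Finset.mem_filter.1 hk).2 ▸ hba k)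
  calc a i = Finset.univ.sup (a i ⊓ b ·) := by
        rw [← Finset.sup_inf_distrib_left, hb, inf_top_eq]
    _ ≤ _ := Finset.sup_le fun k _ => by
      by_cases hk : f k = i
      · exact inf_le_right.trans (Finset.le_sup (by simp [hk]))
      · calc a i ⊓ b k ≤ a i ⊓ a (f k) := inf_le_inf_left _ (hba k)
          _ = ⊥ := ha i (f k) (Ne.symm hk)
          _ ≤ _ := bot_le

lemma ContactStruct.delta_iff_exists_fiber (C : ContactStruct B)
    (ha : ∀ i j, i ≠ j → a i ⊓ a j = ⊥) (hb : Finset.univ.sup b = ⊤)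
    (hba : ∀ k, b k ≤ a (f k)) (i j : ι) :
    C.delta (a i) (a j) ↔ ∃ p, f p = i ∧ ∃ q, f q = j ∧ C.delta (b p) (b q) := by
  rw [eq_finset_sup_fiber ha hb hba i, eq_finset_sup_fiber ha hb hba j,
    C.delta_finset_sup_sup_iff]
  simp

end Refinement

theorem nerve_of_consolidations_general {B : Type*} [BooleanAlgebra B] (C : ContactStruct B)
    {m n : ℕ} (a a' : Fin n → B) (b b' : Fin m → B)
    (ha : IsGoodTuple a) (ha' : IsGoodTuple a') (hb : IsGoodTuple b) (hb' : IsGoodTuple b')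
    (f : Fin m → Fin n)
    (hfollow : ∀ j, b j ≤ a (f j)) (hfollow' : ∀ j, b' j ≤ a' (f j))
    (hnerve : ∀ i j : Fin m, C.delta (b i) (b j) ↔ C.delta (b' i) (b' j)) :
    ∀ i j : Fin n, C.delta (a i) (a j) ↔ C.delta (a' i) (a' j) := by
  intro i j
  rw [C.delta_iff_exists_fiber ha.2.1 hb.1 hfollow, C.delta_iff_exists_fiber ha'.2.1 hb'.1 hfollow']
  simp only [hnerve]

/-- If good tuples `b`, `b'` follow the same arrangement `f` in good
tuples `a`, `a'` respectively and the nerve graphs of `b` and `b'` coincide, then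
the nerve graphs of `a` and `a'` coincide. -/
theorem nerve_of_consolidations {B : Type*} [BooleanAlgebra B] (C : ContactStruct B)
    {m n : ℕ} (a a' : Fin n → B) (b b' : Fin m → B)
    (ha : IsGoodTuple a) (ha' : IsGoodTuple a') (hb : IsGoodTuple b) (hb' : IsGoodTuple b')
    (f : Fin m → Fin n) (hf : Function.Surjective f)
    (hfollow : ∀ j, b j ≤ a (f j)) (hfollow' : ∀ j, b' j ≤ a' (f j))
    (hnerve : ∀ i j : Fin m, C.delta (b i) (b j) ↔ C.delta (b' i) (b' j)) :
    ∀ i j : Fin n, C.delta (a i) (a j) ↔ C.delta (a' i) (a' j) :=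
  nerve_of_consolidations_general C a a' b b' ha ha' hb hb' f hfollow hfollow' hnerve
end

section
/- Let X be a compact Hausdorff space and let (a_i)_{i<n} and (b_j)_{j<m} be finite minimal covers of X by regular closed sets that merely touch (pairwise meets in the regular closed algebra are 0, i.e., pairwise intersections have empty interior). Then the family of nonzero sets a_i ∧ b_j = closure(interior(a_i ∩ b_j)), indexed by pairs (i,j) with a_i ∧ b_j ≠ ∅, is again such a cover, and it refines both (a_i) and (b_j). -/
/-!
The meets `closure (interior (a i ∩ b j))` lie below `a i` and `b j`, so any two distinct ones
lie below two distinct members of one of the original covers and hence merely touch; a member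
that is nonempty has nonempty interior, so merely touching another member it cannot be contained
in it. For the covering property, `⋃ i, interior (a i)` and `⋃ j, interior (b j)` are dense open
sets, so their intersection `⋃ i j, interior (a i ∩ b j)` is dense, and the closure of this finite
union is the union of the meets.
-/

open Set

theorem iUnion_subtype_ne_empty {α ι : Type*} (f : ι → Set α) :
    ⋃ i : {i // f i ≠ ∅}, f i = ⋃ i, f i := by
  refine (iUnion_subset fun i : {i // f i ≠ ∅} => subset_iUnion f i.1).antisymm ?_
  exact iUnion_subset fun i x hx => mem_iUnion.mpr ⟨⟨i, (nonempty_of_mem hx).ne_empty⟩, hx⟩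

section

variable {X : Type*} [TopologicalSpace X]

theorem closure_interior_inter_subset_left {s t : Set X} (hs : IsClosed s) :
    closure (interior (s ∩ t)) ⊆ s :=
  (closure_mono (interior_mono inter_subset_left)).trans hs.closure_interior_subset

theorem closure_interior_inter_subset_right {s t : Set X} (ht : IsClosed t) :
    closure (interior (s ∩ t)) ⊆ t :=
  (closure_mono (interior_mono inter_subset_right)).trans ht.closure_interior_subset

theorem interior_inter_eq_empty_of_subset {s t s' t' : Set X} (h : interior (s ∩ t) = ∅)
    (hs : s' ⊆ s) (ht : t' ⊆ t) : interior (s' ∩ t') = ∅ :=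
  subset_eq_empty (interior_mono (inter_subset_inter hs ht)) h

theorem not_subset_of_interior_inter_eq_empty {s t : Set X} (hs : (interior s).Nonempty)
    (h : interior (s ∩ t) = ∅) : ¬ s ⊆ t := fun hst => by
  rw [inter_eq_left.mpr hst] at h
  exact hs.ne_empty h

theorem dense_iUnion_interior {ι : Type*} {a : ι → Set X}
    (ha : ⋃ i, closure (interior (a i)) = univ) : Dense (⋃ i, interior (a i)) := by
  rw [dense_iff_closure_eq, eq_univ_iff_forall]
  intro x
  obtain ⟨i, hi⟩ := mem_iUnion.mp (ha ▸ mem_univ x)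
  exact closure_mono (subset_iUnion (fun i => interior (a i)) i) hi

theorem iUnion_closure_interior_inter_eq_univ {ι κ : Type*} [Finite ι] [Finite κ]
    {a : ι → Set X} {b : κ → Set X} (ha : ⋃ i, closure (interior (a i)) = univ)
    (hb : ⋃ j, closure (interior (b j)) = univ) :
    ⋃ p : ι × κ, closure (interior (a p.1 ∩ b p.2)) = univ := by
  have hdense : Dense (⋃ p : ι × κ, interior (a p.1 ∩ b p.2)) := by
    simp only [interior_inter, iUnion_prod', ← iUnion_inter_iUnion]
    exact (dense_iUnion_interior ha).inter_of_isOpen_left (dense_iUnion_interior hb)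
      (isOpen_iUnion fun _ => isOpen_interior)
  rw [← closure_iUnion_of_finite, hdense.closure_eq]

theorem interior_closure_interior_inter_eq_empty {ι κ : Type*} {a : ι → Set X} {b : κ → Set X}
    (ha : ∀ i, IsClosed (a i)) (hb : ∀ j, IsClosed (b j))
    (haTouch : ∀ i i', i ≠ i' → interior (a i ∩ a i') = ∅)
    (hbTouch : ∀ j j', j ≠ j' → interior (b j ∩ b j') = ∅) {p q : ι × κ} (hpq : p ≠ q) :
    interior (closure (interior (a p.1 ∩ b p.2)) ∩ closure (interior (a q.1 ∩ b q.2))) = ∅ := by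
  by_cases h : p.1 = q.1
  · exact interior_inter_eq_empty_of_subset (hbTouch _ _ fun h' => hpq (Prod.ext h h'))
      (closure_interior_inter_subset_right (hb _)) (closure_interior_inter_subset_right (hb _))
  · exact interior_inter_eq_empty_of_subset (haTouch _ _ h)
      (closure_interior_inter_subset_left (ha _)) (closure_interior_inter_subset_left (ha _))

end

theorem common_refinement_general (X : Type*) [TopologicalSpace X]
    {n m : ℕ} (a : Fin n → Set X) (b : Fin m → Set X)
    (haRC : ∀ i, closure (interior (a i)) = a i)
    (hbRC : ∀ j, closure (interior (b j)) = b j)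
    (haCov : ⋃ i, a i = Set.univ) (hbCov : ⋃ j, b j = Set.univ)
    (haTouch : ∀ i i' : Fin n, i ≠ i' → interior (a i ∩ a i') = ∅)
    (hbTouch : ∀ j j' : Fin m, j ≠ j' → interior (b j ∩ b j') = ∅) :
    let I := {p : Fin n × Fin m // closure (interior (a p.1 ∩ b p.2)) ≠ ∅}
    let c : I → Set X := fun p => closure (interior (a p.1.1 ∩ b p.1.2))
    (∀ p : I, closure (interior (c p)) = c p) ∧
    (⋃ p : I, c p = Set.univ) ∧
    (∀ p q : I, p ≠ q → interior (c p ∩ c q) = ∅) ∧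
    (∀ p q : I, p ≠ q → ¬ c p ⊆ c q) ∧
    (∀ p : I, c p ⊆ a p.1.1 ∧ c p ⊆ b p.1.2) := by
  intro I c
  have haClosed i : IsClosed (a i) := haRC i ▸ isClosed_closure
  have hbClosed j : IsClosed (b j) := hbRC j ▸ isClosed_closure
  have hTouch (p q : I) (hpq : p ≠ q) : interior (c p ∩ c q) = ∅ :=
    interior_closure_interior_inter_eq_empty haClosed hbClosed haTouch hbTouch
      (Subtype.coe_injective.ne hpq)
  refine ⟨fun _ => closure_interior_idem, ?_, hTouch, fun p q hpq => ?_, fun p =>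
    ⟨closure_interior_inter_subset_left (haClosed _),
      closure_interior_inter_subset_right (hbClosed _)⟩⟩
  · rw [iUnion_subtype_ne_empty (fun p : Fin n × Fin m => closure (interior (a p.1 ∩ b p.2)))]
    exact iUnion_closure_interior_inter_eq_univ (by simpa only [haRC] using haCov)
      (by simpa only [hbRC] using hbCov)
  · have hp : (interior (c p)).Nonempty :=
      (closure_nonempty_iff.mp (nonempty_iff_ne_empty.mpr p.2)).mono
        isOpen_interior.subset_interior_closure
    exact not_subset_of_interior_inter_eq_empty hp (hTouch p q hpq)

/-- Given two finite minimal covers of a compact Hausdorff space `X`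
by regular closed sets that merely touch, the nonzero meets
`closure (interior (a i ∩ b j))` form again such a cover, refining both. -/
theorem common_refinement (X : Type*) [TopologicalSpace X] [CompactSpace X] [T2Space X]
    {n m : ℕ} (a : Fin n → Set X) (b : Fin m → Set X)
    (haRC : ∀ i, closure (interior (a i)) = a i)
    (hbRC : ∀ j, closure (interior (b j)) = b j)
    (haCov : ⋃ i, a i = Set.univ) (hbCov : ⋃ j, b j = Set.univ)
    (haTouch : ∀ i i' : Fin n, i ≠ i' → interior (a i ∩ a i') = ∅)
    (hbTouch : ∀ j j' : Fin m, j ≠ j' → interior (b j ∩ b j') = ∅)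
    (haMin : ∀ i i' : Fin n, i ≠ i' → ¬ a i ⊆ a i')
    (hbMin : ∀ j j' : Fin m, j ≠ j' → ¬ b j ⊆ b j') :
    let I := {p : Fin n × Fin m // closure (interior (a p.1 ∩ b p.2)) ≠ ∅}
    let c : I → Set X := fun p => closure (interior (a p.1.1 ∩ b p.1.2))
    (∀ p : I, closure (interior (c p)) = c p) ∧
    (⋃ p : I, c p = Set.univ) ∧
    (∀ p q : I, p ≠ q → interior (c p ∩ c q) = ∅) ∧
    (∀ p q : I, p ≠ q → ¬ c p ⊆ c q) ∧
    (∀ p : I, c p ⊆ a p.1.1 ∧ c p ⊆ b p.1.2) :=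
  common_refinement_general X a b haRC hbRC haCov hbCov haTouch hbTouch
end

section
/- Let π : X₀ → X be an irreducible continuous surjection of compact Hausdorff spaces with X₀ totally disconnected. Then the map P ↦ π(P) from the Boolean algebra of clopen subsets of X₀ to the Boolean algebra of regular closed subsets of X is an injective Boolean algebra homomorphism. -/
/-! Irreducibility says exactly that every nonempty open `U ⊆ X₀` contains a whole fibre
`π ⁻¹' {y}`. Applied to `U \ F`, this shows that `π '' U ⊆ π '' F` forces `U ⊆ F` when `U` is
open and `F` closed, and every identity follows from this order reflection together with the
closedness of images of closed sets. For the meet, `W := interior (π '' P ∩ π '' Q)` is the image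
of `P ∩ π ⁻¹' W`, which order reflection places inside `Q`. -/

open Set

section IrreducibleMap

variable {X₀ X : Type*} [TopologicalSpace X₀] {π : X₀ → X}
  (hirr : ∀ Y' : Set X₀, IsClosed Y' → Y' ≠ univ → π '' Y' ≠ univ)
include hirr

theorem exists_fiber_subset_of_isOpen {U : Set X₀} (hU : IsOpen U) (hne : U.Nonempty) :
    ∃ y, π ⁻¹' {y} ⊆ U := by
  obtain ⟨y, hy⟩ := ne_univ_iff_exists_notMem _ |>.1 <|
    hirr Uᶜ hU.isClosed_compl (compl_ne_univ.2 hne)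
  exact ⟨y, fun x hx => by_contra fun hxU => hy ⟨x, hxU, hx⟩⟩

variable (hsurj : Function.Surjective π)
include hsurj

theorem subset_of_image_subset_image {U F : Set X₀} (hU : IsOpen U) (hF : IsClosed F)
    (h : π '' U ⊆ π '' F) : U ⊆ F := by
  by_contra hUF
  obtain ⟨y, hy⟩ :=
    exists_fiber_subset_of_isOpen hirr (hU.inter hF.isOpen_compl) (sdiff_nonempty.2 hUF)
  obtain ⟨x, rfl⟩ := hsurj y
  obtain ⟨q, hqF, hq⟩ := h ⟨x, (hy rfl).1, rfl⟩
  exact (hy hq).2 hqF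

theorem injOn_image_isClopen : InjOn (image π) {P : Set X₀ | IsClopen P} :=
  fun _ hP _ hQ h =>
    (subset_of_image_subset_image hirr hsurj hP.isOpen hQ.isClosed h.le).antisymm
      (subset_of_image_subset_image hirr hsurj hQ.isOpen hP.isClosed h.ge)

variable [TopologicalSpace X] (hcont : Continuous π)
include hcont

theorem image_subset_closure_compl_image_compl {U : Set X₀} (hU : IsOpen U) :
    π '' U ⊆ closure (π '' Uᶜ)ᶜ := by
  rintro _ ⟨p, hpU, rfl⟩
  by_contra hp
  have hsub : π '' (U ∩ π ⁻¹' (closure (π '' Uᶜ)ᶜ)ᶜ) ⊆ π '' Uᶜ := by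
    rw [image_inter_preimage]
    exact inter_subset_right.trans (compl_subset_comm.1 subset_closure)
  exact subset_of_image_subset_image hirr hsurj
    (hU.inter (isClosed_closure.isOpen_compl.preimage hcont)) hU.isClosed_compl hsub
    ⟨hpU, hp⟩ hpU

theorem interior_image_inter_subset_image_inter {U F : Set X₀} (hU : IsOpen U)
    (hF : IsClosed F) : interior (π '' U ∩ π '' F) ⊆ π '' (U ∩ F) := by
  set W := interior (π '' U ∩ π '' F)
  have hW : π '' (U ∩ π ⁻¹' W) = W := by
    rw [image_inter_preimage, inter_eq_right]
    exact interior_subset.trans inter_subset_left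
  have hUW : U ∩ π ⁻¹' W ⊆ F :=
    subset_of_image_subset_image hirr hsurj (hU.inter (isOpen_interior.preimage hcont)) hF
      (hW.le.trans (interior_subset.trans inter_subset_right))
  rw [← hW]
  exact image_mono (subset_inter inter_subset_left hUW)

variable [CompactSpace X₀] [T2Space X]

theorem image_compl_eq_closure_compl_image {P : Set X₀} (hP : IsClopen P) :
    π '' Pᶜ = closure (π '' P)ᶜ := by
  refine subset_antisymm ?_ ?_
  · simpa only [compl_compl] using
      image_subset_closure_compl_image_compl hirr hsurj hcont hP.isClosed.isOpen_compl
  · exact closure_minimal (subset_image_compl hsurj)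
      (hcont.isClosedMap _ hP.isOpen.isClosed_compl)

theorem image_inter_eq_closure_interior {P Q : Set X₀} (hP : IsClopen P) (hQ : IsClopen Q) :
    π '' (P ∩ Q) = closure (interior (π '' P ∩ π '' Q)) := by
  have hPQ := hP.inter hQ
  refine subset_antisymm ?_ ?_
  · refine (image_subset_closure_compl_image_compl hirr hsurj hcont hPQ.isOpen).trans
      (closure_mono (interior_maximal ?_ ?_))
    · exact (compl_subset_comm.1 (subset_image_compl hsurj)).trans (image_inter_subset π P Q)
    · exact (hcont.isClosedMap _ hPQ.isOpen.isClosed_compl).isOpen_compl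
  · exact closure_minimal
      (interior_image_inter_subset_image_inter hirr hsurj hcont hP.isOpen hQ.isClosed)
      (hcont.isClosedMap _ hPQ.isClosed)

end IrreducibleMap

theorem image_clopen_boolean_embedding_general {X₀ X : Type*}
    [TopologicalSpace X₀] [CompactSpace X₀]
    [TopologicalSpace X] [T2Space X]
    (π : X₀ → X) (hcont : Continuous π) (hsurj : Function.Surjective π)
    (hirr : ∀ Y' : Set X₀, IsClosed Y' → Y' ≠ Set.univ → π '' Y' ≠ Set.univ) :
    (Function.Injective fun P : {P : Set X₀ // IsClopen P} => π '' P.1) ∧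
    (∀ P Q : Set X₀, IsClopen P → IsClopen Q → π '' (P ∪ Q) = π '' P ∪ π '' Q) ∧
    (∀ P Q : Set X₀, IsClopen P → IsClopen Q →
      π '' (P ∩ Q) = closure (interior (π '' P ∩ π '' Q))) ∧
    (∀ P : Set X₀, IsClopen P → π '' Pᶜ = closure (π '' P)ᶜ) ∧
    (π '' (∅ : Set X₀) = ∅) ∧ (π '' (Set.univ : Set X₀) = Set.univ) :=
  ⟨fun P Q h => Subtype.ext (injOn_image_isClopen hirr hsurj P.2 Q.2 h),
    fun P Q _ _ => image_union π P Q,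
    fun _ _ hP hQ => image_inter_eq_closure_interior hirr hsurj hcont hP hQ,
    fun _ hP => image_compl_eq_closure_compl_image hirr hsurj hcont hP,
    image_empty π, image_univ_of_surjective hsurj⟩

/-- For an irreducible continuous surjection `π : X₀ → X` of compact
Hausdorff spaces with `X₀` totally disconnected, `P ↦ π '' P` is an injective
Boolean algebra homomorphism from the clopen algebra of `X₀` to the regular
closed algebra of `X` (whose join is union, complement is `closure ∘ compl`, and
meet is `closure ∘ interior ∘ inter`). -/
theorem image_clopen_boolean_embedding {X₀ X : Type*}
    [TopologicalSpace X₀] [CompactSpace X₀] [T2Space X₀] [TotallyDisconnectedSpace X₀]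
    [TopologicalSpace X] [CompactSpace X] [T2Space X]
    (π : X₀ → X) (hcont : Continuous π) (hsurj : Function.Surjective π)
    (hirr : ∀ Y' : Set X₀, IsClosed Y' → Y' ≠ Set.univ → π '' Y' ≠ Set.univ) :
    (Function.Injective fun P : {P : Set X₀ // IsClopen P} => π '' P.1) ∧
    (∀ P Q : Set X₀, IsClopen P → IsClopen Q → π '' (P ∪ Q) = π '' P ∪ π '' Q) ∧
    (∀ P Q : Set X₀, IsClopen P → IsClopen Q →
      π '' (P ∩ Q) = closure (interior (π '' P ∩ π '' Q))) ∧
    (∀ P : Set X₀, IsClopen P → π '' Pᶜ = closure (π '' P)ᶜ) ∧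
    (π '' (∅ : Set X₀) = ∅) ∧ (π '' (Set.univ : Set X₀) = Set.univ) :=
  image_clopen_boolean_embedding_general π hcont hsurj hirr
end

section
/- Let π : X₀ → X be an irreducible continuous surjection of compact Hausdorff spaces with X₀ totally disconnected (zero-dimensional). Then the image under π of the clopen algebra of X₀, i.e., {π(P) : P clopen in X₀}, is a basis of closed sets for X: for every closed F ⊆ X and x ∉ F, there is a clopen P ⊆ X₀ with F ⊆ π(P) and x ∉ π(P). -/
/-! Separate the fibre `π ⁻¹' {x}` from the disjoint closed set `π ⁻¹' F` by a clopen `Q`;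
then `P = Qᶜ` contains `π ⁻¹' F`, so `π '' P ⊇ F` by surjectivity, while `P` misses the whole
fibre over `x`. -/

theorem image_clopen_closed_basis_general {X₀ X : Type*}
    [TopologicalSpace X₀] [CompactSpace X₀] [T2Space X₀] [TotallyDisconnectedSpace X₀]
    [TopologicalSpace X] [T2Space X]
    (π : X₀ → X) (hcont : Continuous π) (hsurj : Function.Surjective π) :
    ∀ F : Set X, IsClosed F → ∀ x ∉ F,
      ∃ P : Set X₀, IsClopen P ∧ F ⊆ π '' P ∧ x ∉ π '' P := by
  intro F hF x hx
  have hfibre : π ⁻¹' {x} ⊆ (π ⁻¹' F)ᶜ := fun y hy hyF => hx (hy ▸ hyF)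
  obtain ⟨Q, hQ, hfibreQ, hQF⟩ := exists_clopen_of_closed_subset_open
    (isClosed_singleton.preimage hcont) (hF.preimage hcont).isOpen_compl hfibre
  refine ⟨Qᶜ, hQ.compl, fun z hz => ?_, ?_⟩
  · obtain ⟨y, rfl⟩ := hsurj z
    exact ⟨y, fun hyQ => hQF hyQ hz, rfl⟩
  · rintro ⟨y, hyP, rfl⟩
    exact hyP (hfibreQ rfl)

/-- For an irreducible continuous surjection `π : X₀ → X` of compact
Hausdorff spaces with `X₀` totally disconnected, the images of clopen sets form a
basis of closed sets of `X`: for every closed `F` and `x ∉ F` there is a clopen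
`P ⊆ X₀` with `F ⊆ π '' P` and `x ∉ π '' P`. -/
theorem image_clopen_closed_basis {X₀ X : Type*}
    [TopologicalSpace X₀] [CompactSpace X₀] [T2Space X₀] [TotallyDisconnectedSpace X₀]
    [TopologicalSpace X] [CompactSpace X] [T2Space X]
    (π : X₀ → X) (hcont : Continuous π) (hsurj : Function.Surjective π)
    (hirr : ∀ Y' : Set X₀, IsClosed Y' → Y' ≠ Set.univ → π '' Y' ≠ Set.univ) :
    ∀ F : Set X, IsClosed F → ∀ x ∉ F,
      ∃ P : Set X₀, IsClopen P ∧ F ⊆ π '' P ∧ x ∉ π '' P :=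
  image_clopen_closed_basis_general π hcont hsurj
end

section
/- Let X be a compact Hausdorff space, (a_i)_{i<n} a finite cover of X by regular closed sets with pairwise intersections of empty interior, no containments among distinct members, and all members nonempty. If a regular closed cover (b_j)_{j<m} of the same kind refines (a_i) (each b_j is contained in some a_i), then the function f : m → n sending j to the unique i with b_j ⊆ a_i is well defined and surjective. -/
/-!
A nonempty regular closed set has nonempty interior. So each `b j` contains a nonempty open
set, which cannot lie in two members of `a` since these overlap only in sets with empty
interior; this makes the index `f j` with `b j ⊆ a (f j)` unique. For surjectivity, the
nonempty open set `interior (a i)` meets some `b j = closure (interior (b j))`, hence meets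
`interior (b j) ⊆ a (f j)`, which forces `f j = i`.
-/

open Set

section

variable {X : Type*} [TopologicalSpace X]

theorem interior_nonempty_of_closure_interior_eq {s : Set X}
    (hs : closure (interior s) = s) (hne : s.Nonempty) : (interior s).Nonempty :=
  closure_nonempty_iff.mp (hs.symm ▸ hne)

theorem eq_of_isOpen_subset_inter {ι : Type*} {a : ι → Set X}
    (ha : ∀ i i', i ≠ i' → interior (a i ∩ a i') = ∅) {U : Set X} (hU : IsOpen U)
    (hUne : U.Nonempty) {i i' : ι} (hi : U ⊆ a i) (hi' : U ⊆ a i') : i = i' := by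
  by_contra hne
  have hsub : U ⊆ interior (a i ∩ a i') := hU.subset_interior_iff.mpr (subset_inter hi hi')
  rw [ha i i' hne] at hsub
  exact hUne.ne_empty (subset_empty_iff.mp hsub)

theorem exists_inter_interior_nonempty_of_iUnion_eq_univ {ι : Type*} {b : ι → Set X}
    (hb : ∀ j, closure (interior (b j)) = b j) (hcov : ⋃ j, b j = univ) {U : Set X}
    (hU : IsOpen U) (hUne : U.Nonempty) : ∃ j, (U ∩ interior (b j)).Nonempty := by
  obtain ⟨x, hxU⟩ := hUne
  obtain ⟨j, hxb⟩ := mem_iUnion.mp (hcov ▸ mem_univ x)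
  rw [← hb j] at hxb
  exact ⟨j, mem_closure_iff.mp hxb U hU hxU⟩

end

theorem refinement_arrangement_general (X : Type*) [TopologicalSpace X]
    {n m : ℕ} (a : Fin n → Set X) (b : Fin m → Set X)
    (haRC : ∀ i, closure (interior (a i)) = a i)
    (hbRC : ∀ j, closure (interior (b j)) = b j)
    (hbCov : ⋃ j, b j = Set.univ)
    (haTouch : ∀ i i' : Fin n, i ≠ i' → interior (a i ∩ a i') = ∅)
    (haNe : ∀ i, (a i).Nonempty) (hbNe : ∀ j, (b j).Nonempty)
    (hrefines : ∀ j, ∃ i, b j ⊆ a i) :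
    ∃ f : Fin m → Fin n,
      (∀ j, b j ⊆ a (f j)) ∧
      (∀ j i, b j ⊆ a i → i = f j) ∧
      Function.Surjective f := by
  choose f hf using hrefines
  refine ⟨f, hf, fun j i hi => ?_, fun i => ?_⟩
  · exact eq_of_isOpen_subset_inter haTouch isOpen_interior
      (interior_nonempty_of_closure_interior_eq (hbRC j) (hbNe j))
      (interior_subset.trans hi) (interior_subset.trans (hf j))
  · obtain ⟨j, hj⟩ := exists_inter_interior_nonempty_of_iUnion_eq_univ hbRC hbCov
      isOpen_interior (interior_nonempty_of_closure_interior_eq (haRC i) (haNe i))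
    exact ⟨j, eq_of_isOpen_subset_inter haTouch (isOpen_interior.inter isOpen_interior) hj
      (inter_subset_right.trans (interior_subset.trans (hf j)))
      (inter_subset_left.trans interior_subset)⟩

/-- If `(b j)` is a regular closed minimal merely-touching cover
refining another such cover `(a i)` of a compact Hausdorff space, then the map
sending each `j` to the unique `i` with `b j ⊆ a i` is well defined and
surjective. -/
theorem refinement_arrangement (X : Type*) [TopologicalSpace X] [CompactSpace X] [T2Space X]
    {n m : ℕ} (a : Fin n → Set X) (b : Fin m → Set X)
    (haRC : ∀ i, closure (interior (a i)) = a i)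
    (hbRC : ∀ j, closure (interior (b j)) = b j)
    (haCov : ⋃ i, a i = Set.univ) (hbCov : ⋃ j, b j = Set.univ)
    (haTouch : ∀ i i' : Fin n, i ≠ i' → interior (a i ∩ a i') = ∅)
    (hbTouch : ∀ j j' : Fin m, j ≠ j' → interior (b j ∩ b j') = ∅)
    (haMin : ∀ i i' : Fin n, i ≠ i' → ¬ a i ⊆ a i')
    (hbMin : ∀ j j' : Fin m, j ≠ j' → ¬ b j ⊆ b j')
    (haNe : ∀ i, (a i).Nonempty) (hbNe : ∀ j, (b j).Nonempty)
    (hrefines : ∀ j, ∃ i, b j ⊆ a i) :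
    ∃ f : Fin m → Fin n,
      (∀ j, b j ⊆ a (f j)) ∧
      (∀ j i, b j ⊆ a i → i = f j) ∧
      Function.Surjective f :=
  refinement_arrangement_general X a b haRC hbRC hbCov haTouch haNe hbNe hrefines
end

section
/- Let f : m → n be a pattern, i.e., a surjection between natural numbers (viewed as {0,…,m−1} → {0,…,n−1}) such that |i − j| ≤ 1 implies |f(i) − f(j)| ≤ 1. Suppose in a contact algebra, (b_j)_{j<m} is a chain (a good tuple with b_i δ b_j ⟹ |i − j| ≤ 1) following the arrangement f in a good tuple (a_i)_{i<n} with the consolidation property a_i = ⋁_{j∈f⁻¹(i)} b_j. Then (a_i)_{i<n} is also a chain: a_i δ a_{i'} implies |i − i'| ≤ 1. -/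
namespace ContactStruct

variable {B : Type*} [BooleanAlgebra B] (C : ContactStruct B)

theorem exists_delta_of_delta_finset_sup {ι : Type*} {s : Finset ι} {g : ι → B} {x : B}
    (h : C.delta x (s.sup g)) : ∃ j ∈ s, C.delta x (g j) := by
  induction s using Finset.cons_induction with
  | empty => exact absurd (C.symm _ _ h) (C.bot_not x)
  | cons j s _ ih =>
    rw [Finset.sup_cons, C.sup_iff] at h
    rcases h with h | h
    · exact ⟨j, Finset.mem_cons_self j s, h⟩
    · obtain ⟨k, hk, hd⟩ := ih h
      exact ⟨k, Finset.mem_cons_of_mem hk, hd⟩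

theorem exists_delta_of_finset_sup_delta_finset_sup {ι κ : Type*} {s : Finset ι} {t : Finset κ}
    {g : ι → B} {h : κ → B} (hd : C.delta (s.sup g) (t.sup h)) :
    ∃ i ∈ s, ∃ j ∈ t, C.delta (g i) (h j) := by
  obtain ⟨j, hj, hdj⟩ := C.exists_delta_of_delta_finset_sup hd
  obtain ⟨i, hi, hdi⟩ := C.exists_delta_of_delta_finset_sup (C.symm _ _ hdj)
  exact ⟨i, hi, j, hj, C.symm _ _ hdi⟩

end ContactStruct

theorem chain_consolidation_of_pattern_general {B : Type*} [BooleanAlgebra B] (C : ContactStruct B)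
    {m n : ℕ} (a : Fin n → B) (b : Fin m → B)
    (f : Fin m → Fin n)
    (hpattern : ∀ i j : Fin m, |(i : ℤ) - (j : ℤ)| ≤ 1 → |((f i : ℕ) : ℤ) - ((f j : ℕ) : ℤ)| ≤ 1)
    (hchain : ∀ i j : Fin m, C.delta (b i) (b j) → |(i : ℤ) - (j : ℤ)| ≤ 1)
    (hconsol : ∀ i : Fin n, a i = (Finset.univ.filter fun j => f j = i).sup b) :
    ∀ i i' : Fin n, C.delta (a i) (a i') → |(i : ℤ) - (i' : ℤ)| ≤ 1 := by
  intro i i' hd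
  rw [hconsol i, hconsol i'] at hd
  obtain ⟨j, hj, j', hj', hbd⟩ := C.exists_delta_of_finset_sup_delta_finset_sup hd
  simp only [Finset.mem_filter, Finset.mem_univ, true_and] at hj hj'
  subst hj hj'
  exact hpattern j j' (hchain j j' hbd)

/-- If a chain `(b j)` follows a pattern `f` in a good tuple `(a i)`
with the consolidation property, then `(a i)` is also a chain. -/
theorem chain_consolidation_of_pattern {B : Type*} [BooleanAlgebra B] (C : ContactStruct B)
    {m n : ℕ} (a : Fin n → B) (b : Fin m → B)
    (ha : IsGoodTuple a) (hb : IsGoodTuple b)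
    (f : Fin m → Fin n) (hf : Function.Surjective f)
    (hpattern : ∀ i j : Fin m, |(i : ℤ) - (j : ℤ)| ≤ 1 → |((f i : ℕ) : ℤ) - ((f j : ℕ) : ℤ)| ≤ 1)
    (hchain : ∀ i j : Fin m, C.delta (b i) (b j) → |(i : ℤ) - (j : ℤ)| ≤ 1)
    (hfollow : ∀ j, b j ≤ a (f j))
    (hconsol : ∀ i : Fin n, a i = (Finset.univ.filter fun j => f j = i).sup b) :
    ∀ i i' : Fin n, C.delta (a i) (a i') → |(i : ℤ) - (i' : ℤ)| ≤ 1 :=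
  chain_consolidation_of_pattern_general C a b f hpattern hchain hconsol
end
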